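/- Let α be an ideal norm on L(ℓ₂ⁿ, ·) and β an ideal norm on L(·, ℓ₂ⁿ). Then (1) α(ι_{2,∞}ⁿ) · 1-π₂ⁿ(u) ≤ √n · α(u) for all u : ℓ₂ⁿ → X, and (2) β(ι_{1,2}ⁿ) · 1-π₂ⁿ(v*) ≤ √n · β(v) for all v : X → ℓ₂ⁿ. -/

import Mathlib

open MeasureTheory ProbabilityTheory

noncomputable section

/-- `ℓ₂ⁿ`. -/
abbrev l2n (n : ℕ) := EuclideanSpace ℝ (Fin n)
/-- `ℓ∞ⁿ` (i.e. `ℝⁿ` with the sup norm). -/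
abbrev linfn (n : ℕ) := Fin n → ℝ
/-- `ℓ₁ⁿ`. -/
abbrev l1n (n : ℕ) := PiLp 1 (fun _ : Fin n => ℝ)

/-- formal identity `ι_{2,∞}ⁿ : ℓ₂ⁿ → ℓ∞ⁿ`. -/
def iota2inf (n : ℕ) : l2n n →L[ℝ] linfn n :=
  (PiLp.continuousLinearEquiv 2 ℝ (fun _ : Fin n => ℝ)).toContinuousLinearMap

/-- formal identity `ι_{1,2}ⁿ : ℓ₁ⁿ → ℓ₂ⁿ`. -/
def iota12 (n : ℕ) : l1n n →L[ℝ] l2n n :=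
  ((PiLp.continuousLinearEquiv 2 ℝ (fun _ : Fin n => ℝ)).symm.toContinuousLinearMap).comp
    (PiLp.continuousLinearEquiv 1 ℝ (fun _ : Fin n => ℝ)).toContinuousLinearMap

/-- An ideal norm on `L(ℓ₂ⁿ, ·)`: a norm `α` on each component `L(ℓ₂ⁿ, X)` with
`‖TuA‖ ≤ α(TuA) ≤ ‖T‖ α(u) ‖A‖` and `α(a ⊗ x) = ‖a‖ ‖x‖`. -/
structure IdealNormDom (n : ℕ) where
  α : ∀ (X : Type) [NormedAddCommGroup X] [NormedSpace ℝ X] [CompleteSpace X],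
        (l2n n →L[ℝ] X) → ℝ
  add_le : ∀ (X : Type) [NormedAddCommGroup X] [NormedSpace ℝ X] [CompleteSpace X]
        (u v : l2n n →L[ℝ] X), α X (u + v) ≤ α X u + α X v
  smul_eq : ∀ (X : Type) [NormedAddCommGroup X] [NormedSpace ℝ X] [CompleteSpace X]
        (c : ℝ) (u : l2n n →L[ℝ] X), α X (c • u) = |c| * α X u
  eq_zero : ∀ (X : Type) [NormedAddCommGroup X] [NormedSpace ℝ X] [CompleteSpace X]
        (u : l2n n →L[ℝ] X), α X u = 0 → u = 0
  ideal_lower : ∀ (X Y : Type) [NormedAddCommGroup X] [NormedSpace ℝ X] [CompleteSpace X]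
        [NormedAddCommGroup Y] [NormedSpace ℝ Y] [CompleteSpace Y]
        (T : X →L[ℝ] Y) (u : l2n n →L[ℝ] X) (A : l2n n →L[ℝ] l2n n),
        ‖T.comp (u.comp A)‖ ≤ α Y (T.comp (u.comp A))
  ideal_upper : ∀ (X Y : Type) [NormedAddCommGroup X] [NormedSpace ℝ X] [CompleteSpace X]
        [NormedAddCommGroup Y] [NormedSpace ℝ Y] [CompleteSpace Y]
        (T : X →L[ℝ] Y) (u : l2n n →L[ℝ] X) (A : l2n n →L[ℝ] l2n n),
        α Y (T.comp (u.comp A)) ≤ ‖T‖ * α X u * ‖A‖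
  rank_one : ∀ (X : Type) [NormedAddCommGroup X] [NormedSpace ℝ X] [CompleteSpace X]
        (a : l2n n) (x : X), α X ((innerSL ℝ a).smulRight x) = ‖a‖ * ‖x‖

/-- An ideal norm on `L(·, ℓ₂ⁿ)`: a norm `β` on each component `L(Y, ℓ₂ⁿ)` with
`‖AvT‖ ≤ β(AvT) ≤ ‖A‖ β(v) ‖T‖` and `β(b ⊗ y) = ‖b‖ ‖y‖`. -/
structure IdealNormCod (n : ℕ) where
  β : ∀ (Y : Type) [NormedAddCommGroup Y] [NormedSpace ℝ Y] [CompleteSpace Y],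
        (Y →L[ℝ] l2n n) → ℝ
  add_le : ∀ (Y : Type) [NormedAddCommGroup Y] [NormedSpace ℝ Y] [CompleteSpace Y]
        (v w : Y →L[ℝ] l2n n), β Y (v + w) ≤ β Y v + β Y w
  smul_eq : ∀ (Y : Type) [NormedAddCommGroup Y] [NormedSpace ℝ Y] [CompleteSpace Y]
        (c : ℝ) (v : Y →L[ℝ] l2n n), β Y (c • v) = |c| * β Y v
  eq_zero : ∀ (Y : Type) [NormedAddCommGroup Y] [NormedSpace ℝ Y] [CompleteSpace Y]
        (v : Y →L[ℝ] l2n n), β Y v = 0 → v = 0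
  ideal_lower : ∀ (X Y : Type) [NormedAddCommGroup X] [NormedSpace ℝ X] [CompleteSpace X]
        [NormedAddCommGroup Y] [NormedSpace ℝ Y] [CompleteSpace Y]
        (A : l2n n →L[ℝ] l2n n) (v : Y →L[ℝ] l2n n) (T : X →L[ℝ] Y),
        ‖A.comp (v.comp T)‖ ≤ β X (A.comp (v.comp T))
  ideal_upper : ∀ (X Y : Type) [NormedAddCommGroup X] [NormedSpace ℝ X] [CompleteSpace X]
        [NormedAddCommGroup Y] [NormedSpace ℝ Y] [CompleteSpace Y]
        (A : l2n n →L[ℝ] l2n n) (v : Y →L[ℝ] l2n n) (T : X →L[ℝ] Y),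
        β X (A.comp (v.comp T)) ≤ ‖A‖ * β Y v * ‖T‖
  rank_one : ∀ (Y : Type) [NormedAddCommGroup Y] [NormedSpace ℝ Y] [CompleteSpace Y]
        (b : Y →L[ℝ] ℝ) (y : l2n n), β Y (b.smulRight y) = ‖b‖ * ‖y‖


/-- The weak-`ℓ₂` norm `sup_{‖a‖_{X*}≤1} (∑ |⟨x_i,a⟩|²)^{1/2}`. -/
def weakL2 {X : Type*} [NormedAddCommGroup X] [NormedSpace ℝ X] {m : ℕ}
    (x : Fin m → X) : ℝ :=
  ⨆ a : {a : X →L[ℝ] ℝ // ‖a‖ ≤ 1}, Real.sqrt (∑ i, (a.1 (x i)) ^ 2)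

/-- The absolutely 2-summing norm (of a map between normed spaces). -/
def pi2 {X Y : Type*} [NormedAddCommGroup X] [NormedSpace ℝ X]
    [NormedAddCommGroup Y] [NormedSpace ℝ Y] (T : X → Y) : ℝ :=
  sInf {c | 0 ≤ c ∧ ∀ (m : ℕ) (x : Fin m → X),
    Real.sqrt (∑ i, ‖T (x i)‖ ^ 2) ≤ c * weakL2 x}

/-- The equal-norm 2-summing constant `1-π₂ⁿ`. -/
def eqPi2n (n : ℕ) {X Y : Type*} [NormedAddCommGroup X] [NormedSpace ℝ X]
    [NormedAddCommGroup Y] [NormedSpace ℝ Y] (T : X → Y) : ℝ :=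
  sInf {c | 0 ≤ c ∧ ∀ x : Fin n → X, (∀ i j, ‖T (x i)‖ = ‖T (x j)‖) →
    Real.sqrt (∑ i, ‖T (x i)‖ ^ 2) ≤ c * weakL2 x}

/-- The adjoint of `v : X → ℓ₂ⁿ`, as a plain map `ℓ₂ⁿ → X*`. -/
def adjointCod {n : ℕ} {X : Type*} [NormedAddCommGroup X] [NormedSpace ℝ X]
    (v : X →L[ℝ] l2n n) : l2n n → (X →L[ℝ] ℝ) :=
  fun z => (innerSL ℝ z).comp v

/-! Averaging over the `2ⁿ` sign vectors `ε` extracts the diagonal of a matrix: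
`2⁻ⁿ ∑_ε D_ε M D_ε = diag M`. If `‖u x_i‖ = c` for all `i`, pick norming functionals `b_i` of
`u x_i`; then `M = (b_i)_i ∘ u ∘ (e_j ↦ x_j) : ℓ₂ⁿ → ℓ∞ⁿ` has constant diagonal `c`, its outer
factors have norms at most `1` and `weakL2 x`, and the signs can be absorbed into them. The ideal
property gives `c · α(ι_{2,∞}ⁿ) ≤ α(u) · weakL2 x`, while `(∑ ‖u x_i‖²)^{1/2} = √n · c`.
Dually, for `‖v* z_i‖ = c` and any `t < c` there are `y_j` in the unit ball with
`(v* z_j) y_j = t`, so `(⟪z_i, ·⟫)_i ∘ v ∘ (e_j ↦ y_j) : ℓ₁ⁿ → ℓ₂ⁿ` has constant diagonal `t`; this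
bounds `t · β(ι_{1,2}ⁿ)`, and `t → c` finishes. -/

open scoped ENNReal InnerProductSpace

theorem abs_intCast_units (u : ℤˣ) : |(u : ℝ)| = 1 := by
  rcases Int.units_eq_one_or u with rfl | rfl <;> simp

section RademacherSigns

variable {ι : Type*} [Fintype ι] [DecidableEq ι]

theorem sum_units_int_apply_mul_apply (i j : ι) :
    ∑ ε : ι → ℤˣ, ((ε i : ℝ) * ε j) = if i = j then 2 ^ Fintype.card ι else 0 := by
  split_ifs with hij
  · subst hij
    simp [← Int.cast_mul, ← Units.val_mul, Int.units_mul_self, Fintype.card_units_int]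
  · -- flipping the sign of the `j`-th coordinate permutes the sign vectors and negates the summand
    have hflip : ∑ ε : ι → ℤˣ, ((ε i : ℝ) * ε j) = -∑ ε : ι → ℤˣ, ((ε i : ℝ) * ε j) := by
      conv_lhs => rw [← Equiv.sum_comp (Equiv.mulRight (Pi.mulSingle j (-1)))]
      rw [← Finset.sum_neg_distrib]
      refine Finset.sum_congr rfl fun ε _ => ?_
      simp [hij]
    linarith

theorem sum_units_int_apply_mul_map_sum {E F : Type*} [AddCommGroup E] [Module ℝ E] [FunLike F E ℝ]
    [LinearMapClass F ℝ E ℝ] (f : F) (g : ι → E) (w : ι → ℝ) (i : ι) :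
    ∑ ε : ι → ℤˣ, (ε i : ℝ) * f (∑ j, w j • (ε j : ℝ) • g j)
      = 2 ^ Fintype.card ι * (w i * f (g i)) := by
  simp only [map_sum, map_smul, smul_eq_mul, Finset.mul_sum]
  rw [Finset.sum_comm]
  calc ∑ j, ∑ ε : ι → ℤˣ, (ε i : ℝ) * (w j * ((ε j : ℝ) * f (g j)))
      = ∑ j, (∑ ε : ι → ℤˣ, ((ε i : ℝ) * ε j)) * (w j * f (g j)) := by
        simp only [Finset.sum_mul]
        exact Finset.sum_congr rfl fun j _ => Finset.sum_congr rfl fun ε _ => by ring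
    _ = 2 ^ Fintype.card ι * (w i * f (g i)) := by
        simp [sum_units_int_apply_mul_apply]

end RademacherSigns

section WeakL2

variable {E : Type*} [NormedAddCommGroup E] [NormedSpace ℝ E] {m : ℕ}

theorem bddAbove_range_weakL2 (x : Fin m → E) :
    BddAbove (Set.range fun a : {a : StrongDual ℝ E // ‖a‖ ≤ 1} =>
      √(∑ i, (a.1 (x i)) ^ 2)) := by
  refine ⟨√(∑ i, ‖x i‖ ^ 2), ?_⟩
  rintro _ ⟨a, rfl⟩
  refine Real.sqrt_le_sqrt (Finset.sum_le_sum fun i _ => sq_le_sq.mpr ?_)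
  simpa [abs_norm] using a.1.le_of_opNorm_le a.2 (x i)

theorem sqrt_sum_sq_le_weakL2 (x : Fin m → E) {a : StrongDual ℝ E} (ha : ‖a‖ ≤ 1) :
    √(∑ i, (a (x i)) ^ 2) ≤ weakL2 x :=
  le_ciSup (f := fun a : {a : StrongDual ℝ E // ‖a‖ ≤ 1} => √(∑ i, (a.1 (x i)) ^ 2))
    (bddAbove_range_weakL2 x) ⟨a, ha⟩

theorem weakL2_nonneg (x : Fin m → E) : 0 ≤ weakL2 x :=
  (Real.sqrt_nonneg _).trans (sqrt_sum_sq_le_weakL2 x (a := 0) (by simp))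

theorem weakL2_units_int_smul (ε : Fin m → ℤˣ) (x : Fin m → E) :
    weakL2 (fun i => (ε i : ℝ) • x i) = weakL2 x := by
  have hsq (u : ℤˣ) : (u : ℝ) ^ 2 = 1 := by rw [← sq_abs, abs_intCast_units, one_pow]
  simp only [weakL2, map_smul, smul_eq_mul, mul_pow, hsq, one_mul]

end WeakL2

section Synthesis

variable {ι E : Type*} [Fintype ι] [NormedAddCommGroup E] [NormedSpace ℝ E]

def synthesis (p : ℝ≥0∞) (x : ι → E) : PiLp p (fun _ : ι => ℝ) →L[ℝ] E :=
  ∑ j, (PiLp.proj p (fun _ : ι => ℝ) j).smulRight (x j)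

@[simp]
theorem synthesis_apply (p : ℝ≥0∞) (x : ι → E) (w : PiLp p (fun _ : ι => ℝ)) :
    synthesis p x w = ∑ j, w j • x j := by
  simp [synthesis]

theorem norm_synthesis_one_le (x : ι → E) {C : ℝ} (hC : 0 ≤ C) (hx : ∀ j, ‖x j‖ ≤ C) :
    ‖synthesis 1 x‖ ≤ C := by
  refine ContinuousLinearMap.opNorm_le_bound _ hC fun w => ?_
  rw [synthesis_apply, PiLp.norm_eq_of_L1, Finset.mul_sum]
  refine (norm_sum_le _ _).trans (Finset.sum_le_sum fun j _ => ?_)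
  rw [norm_smul, mul_comm]
  exact mul_le_mul_of_nonneg_right (hx j) (norm_nonneg _)

theorem norm_synthesis_two_le {m : ℕ} (x : Fin m → E) : ‖synthesis 2 x‖ ≤ weakL2 x := by
  refine ContinuousLinearMap.opNorm_le_bound _ (weakL2_nonneg x) fun w => ?_
  obtain ⟨a, ha, hax⟩ := exists_dual_vector'' ℝ (synthesis 2 x w)
  have hw : ‖w‖ = √(∑ j, (w j) ^ 2) := by simp [EuclideanSpace.norm_eq]
  calc ‖synthesis 2 x w‖ = ∑ j, w j * a (x j) := by simpa using hax.symm
    _ ≤ √(∑ j, (w j) ^ 2) * √(∑ j, (a (x j)) ^ 2) := Real.sum_mul_le_sqrt_mul_sqrt _ _ _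
    _ ≤ ‖w‖ * weakL2 x := by rw [hw]; gcongr; exact sqrt_sum_sq_le_weakL2 x ha
    _ = weakL2 x * ‖w‖ := mul_comm _ _

theorem adjoint_synthesis_apply [DecidableEq ι] {H : Type*} [NormedAddCommGroup H]
    [InnerProductSpace ℝ H] [CompleteSpace H] (z : ι → H) (w : H) (i : ι) :
    (ContinuousLinearMap.adjoint (synthesis 2 z) w) i = ⟪z i, w⟫_ℝ := by
  have hz : synthesis 2 z (EuclideanSpace.single i 1) = z i := by simp
  simpa [EuclideanSpace.inner_single_left, hz] using
    ContinuousLinearMap.adjoint_inner_right (synthesis 2 z) (EuclideanSpace.single i 1) w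

end Synthesis

theorem Seminorm.mul_le_of_sum_eq_smul {E ι : Type*} [AddCommGroup E] [Module ℝ E]
    [Fintype ι] [Nonempty ι] (p : Seminorm ℝ E) {f : ι → E} {e : E} {c B : ℝ}
    (hsum : ∑ i, f i = (Fintype.card ι * c) • e) (hf : ∀ i, p (f i) ≤ B) : c * p e ≤ B := by
  have hcard : (0 : ℝ) < Fintype.card ι := by exact_mod_cast Fintype.card_pos
  refine le_of_mul_le_mul_left ?_ hcard
  calc (Fintype.card ι : ℝ) * (c * p e) ≤ Fintype.card ι * (|c| * p e) := by
        gcongr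
        exact le_abs_self c
    _ = p (∑ i, f i) := by
        rw [hsum, map_smul_eq_mul, Real.norm_eq_abs, abs_mul, Nat.abs_cast, mul_assoc]
    _ ≤ ∑ i, p (f i) := Finset.le_sum_of_subadditive p (map_zero p).le (map_add_le_add p) _ _
    _ ≤ Fintype.card ι * B := by
        simpa using Finset.sum_le_card_nsmul Finset.univ (fun i => p (f i)) B fun i _ => hf i

theorem ContinuousLinearMap.exists_norm_le_one_apply_eq {E : Type*} [NormedAddCommGroup E]
    [NormedSpace ℝ E] (φ : StrongDual ℝ E) {t : ℝ} (ht : |t| < ‖φ‖) :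
    ∃ y, ‖y‖ ≤ 1 ∧ φ y = t := by
  obtain ⟨y, hy, hφy⟩ := φ.exists_lt_apply_of_lt_opNorm ht
  have hφy0 : φ y ≠ 0 := norm_pos_iff.mp ((abs_nonneg t).trans_lt hφy)
  refine ⟨(t / φ y) • y, ?_, by rw [map_smul, smul_eq_mul, div_mul_cancel₀ _ hφy0]⟩
  rw [norm_smul, norm_div, Real.norm_eq_abs t]
  calc |t| / ‖φ y‖ * ‖y‖ ≤ 1 * 1 := by
        gcongr
        exact (div_le_one ((abs_nonneg t).trans_lt hφy)).mpr hφy.le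
    _ = 1 := one_mul 1

theorem mul_le_of_forall_lt_imp_mul_le {K c R : ℝ} (hK : 0 ≤ K) (hR : 0 ≤ R)
    (h : ∀ t, 0 ≤ t → t < c → K * t ≤ R) : K * c ≤ R := by
  by_contra! hlt
  have hKpos : 0 < K := hK.lt_of_ne (by rintro rfl; linarith)
  obtain ⟨t, hRt, htc⟩ := exists_between ((div_lt_iff₀' hKpos).mpr hlt)
  have := h t ((div_nonneg hR hK).trans hRt.le) htc
  rw [div_lt_iff₀' hKpos] at hRt
  linarith

theorem mul_eqPi2n_le {n : ℕ} {E F : Type*} [NormedAddCommGroup E] [NormedSpace ℝ E]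
    [NormedAddCommGroup F] [NormedSpace ℝ F] (T : E → F) {K C : ℝ} (hK : 0 ≤ K) (hC : 0 ≤ C)
    (h : ∀ (x : Fin n → E) (c : ℝ), (∀ i, ‖T (x i)‖ = c) → K * c ≤ C * weakL2 x) :
    K * eqPi2n n T ≤ √n * C := by
  rcases hK.eq_or_lt with rfl | hK
  · simpa using mul_nonneg (Real.sqrt_nonneg n) hC
  suffices eqPi2n n T ≤ √n * C / K by
    calc K * eqPi2n n T ≤ K * (√n * C / K) := by gcongr
      _ = √n * C := by field_simp
  refine csInf_le ⟨0, fun c hc => hc.1⟩ ⟨by positivity, fun x hx => ?_⟩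
  have hbound : 0 ≤ C * weakL2 x / K := div_nonneg (mul_nonneg hC (weakL2_nonneg x)) hK.le
  have hxi (i : Fin n) : ‖T (x i)‖ ≤ C * weakL2 x / K := by
    rw [le_div_iff₀ hK, mul_comm]
    exact h x _ fun j => hx j i
  calc √(∑ i, ‖T (x i)‖ ^ 2) ≤ √(∑ _i : Fin n, (C * weakL2 x / K) ^ 2) := by
        gcongr with i
        exact hxi i
    _ = √n * C / K * weakL2 x := by
        rw [Finset.sum_const, Finset.card_univ, Fintype.card_fin, nsmul_eq_mul,
          Real.sqrt_mul (Nat.cast_nonneg _), Real.sqrt_sq hbound]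
        ring

section IdealNorms

variable {n : ℕ}

def IdealNormDom.seminorm (A : IdealNormDom n) (X : Type) [NormedAddCommGroup X]
    [NormedSpace ℝ X] [CompleteSpace X] : Seminorm ℝ (l2n n →L[ℝ] X) :=
  Seminorm.of (A.α X) (A.add_le X) fun c u => by rw [A.smul_eq, Real.norm_eq_abs]

def IdealNormCod.seminorm (B : IdealNormCod n) (Y : Type) [NormedAddCommGroup Y]
    [NormedSpace ℝ Y] [CompleteSpace Y] : Seminorm ℝ (Y →L[ℝ] l2n n) :=
  Seminorm.of (B.β Y) (B.add_le Y) fun c v => by rw [B.smul_eq, Real.norm_eq_abs]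

@[simp]
theorem adjointCod_apply {X : Type*} [NormedAddCommGroup X] [NormedSpace ℝ X]
    (v : X →L[ℝ] l2n n) (z : l2n n) (x : X) : adjointCod v z x = ⟪z, v x⟫_ℝ := rfl

variable {X : Type} [NormedAddCommGroup X] [NormedSpace ℝ X] [CompleteSpace X]

theorem IdealNormDom.α_nonneg (A : IdealNormDom n) (u : l2n n →L[ℝ] X) : 0 ≤ A.α X u :=
  apply_nonneg (A.seminorm X) u

theorem IdealNormCod.β_nonneg (B : IdealNormCod n) (v : X →L[ℝ] l2n n) : 0 ≤ B.β X v :=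
  apply_nonneg (B.seminorm X) v

theorem IdealNormDom.α_iota2inf_mul_le (A : IdealNormDom n) (u : l2n n →L[ℝ] X)
    (x : Fin n → l2n n) (b : Fin n → StrongDual ℝ X) (hb : ∀ i, ‖b i‖ ≤ 1) {c : ℝ}
    (hbux : ∀ i, b i (u (x i)) = c) :
    A.α (linfn n) (iota2inf n) * c ≤ A.α X u * weakL2 x := by
  rw [mul_comm]
  refine (A.seminorm (linfn n)).mul_le_of_sum_eq_smul
    (f := fun ε : Fin n → ℤˣ => (ContinuousLinearMap.pi fun i => (ε i : ℝ) • b i).comp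
      (u.comp (synthesis 2 fun j => (ε j : ℝ) • x j))) ?_ fun ε => ?_
  · ext w i
    have := sum_units_int_apply_mul_map_sum ((b i).comp u) x w i
    simp only [ContinuousLinearMap.comp_apply, hbux] at this
    simp only [sum_apply, Finset.sum_apply, ContinuousLinearMap.comp_apply,
      ContinuousLinearMap.pi_apply, smul_apply, synthesis_apply,
      smul_eq_mul, Pi.smul_apply]
    rw [this, Fintype.card_fun, Fintype.card_units_int]
    simp [iota2inf]
    ring
  · calc A.α (linfn n) _ ≤ ‖ContinuousLinearMap.pi fun i => (ε i : ℝ) • b i‖ * A.α X u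
          * ‖synthesis 2 fun j => (ε j : ℝ) • x j‖ := A.ideal_upper _ _ _ _ _
      _ ≤ 1 * A.α X u * weakL2 x := by
          have hu := A.α_nonneg u
          gcongr
          · refine ContinuousLinearMap.norm_pi_le_of_le (fun i => ?_) zero_le_one
            rw [norm_smul, Real.norm_eq_abs, abs_intCast_units, one_mul]
            exact hb i
          · exact (norm_synthesis_two_le _).trans (weakL2_units_int_smul ε x).le
      _ = A.α X u * weakL2 x := by rw [one_mul]

theorem IdealNormCod.β_iota12_mul_le (B : IdealNormCod n) (v : X →L[ℝ] l2n n)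
    (z : Fin n → l2n n) (y : Fin n → X) (hy : ∀ j, ‖y j‖ ≤ 1) {t : ℝ}
    (hzvy : ∀ i, adjointCod v (z i) (y i) = t) :
    B.β (l1n n) (iota12 n) * t ≤ B.β X v * weakL2 z := by
  rw [mul_comm]
  refine (B.seminorm (l1n n)).mul_le_of_sum_eq_smul
    (f := fun ε : Fin n → ℤˣ => (ContinuousLinearMap.adjoint
      (synthesis 2 fun i => (ε i : ℝ) • z i)).comp (v.comp (synthesis 1 fun j => (ε j : ℝ) • y j)))
    ?_ fun ε => ?_
  · ext w i
    have := sum_units_int_apply_mul_map_sum (adjointCod v (z i)) y w i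
    simp only [hzvy, adjointCod_apply] at this
    simp only [sum_apply, WithLp.ofLp_sum, Finset.sum_apply, ContinuousLinearMap.comp_apply,
      adjoint_synthesis_apply, real_inner_smul_left, synthesis_apply]
    rw [this, Fintype.card_fun, Fintype.card_units_int]
    simp [iota12]
    ring
  · have hv := B.β_nonneg v
    calc B.β (l1n n) _ ≤ ‖ContinuousLinearMap.adjoint (synthesis 2 fun i => (ε i : ℝ) • z i)‖
          * B.β X v * ‖synthesis 1 fun j => (ε j : ℝ) • y j‖ := B.ideal_upper _ _ _ _ _
      _ ≤ weakL2 z * B.β X v * 1 := by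
          gcongr
          · exact mul_nonneg (weakL2_nonneg z) hv
          · rw [LinearIsometryEquiv.norm_map]
            exact (norm_synthesis_two_le _).trans (weakL2_units_int_smul ε z).le
          · refine norm_synthesis_one_le _ zero_le_one fun j => ?_
            rw [norm_smul, Real.norm_eq_abs, abs_intCast_units, one_mul]
            exact hy j
      _ = B.β X v * weakL2 z := by ring

theorem IdealNormDom.α_iota2inf_mul_norm_le (A : IdealNormDom n) (u : l2n n →L[ℝ] X)
    (x : Fin n → l2n n) {c : ℝ} (hc : ∀ i, ‖u (x i)‖ = c) :
    A.α (linfn n) (iota2inf n) * c ≤ A.α X u * weakL2 x := by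
  choose b hb hbux using fun i => exists_dual_vector'' ℝ (u (x i))
  exact A.α_iota2inf_mul_le u x b hb fun i => by simpa [hc i] using hbux i

theorem IdealNormCod.β_iota12_mul_norm_le (B : IdealNormCod n) (v : X →L[ℝ] l2n n)
    (z : Fin n → l2n n) {c : ℝ} (hc : ∀ i, ‖adjointCod v (z i)‖ = c) :
    B.β (l1n n) (iota12 n) * c ≤ B.β X v * weakL2 z := by
  refine mul_le_of_forall_lt_imp_mul_le (B.β_nonneg _)
    (mul_nonneg (B.β_nonneg v) (weakL2_nonneg z)) fun t ht htc => ?_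
  choose y hy hzvy using fun i => (adjointCod v (z i)).exists_norm_le_one_apply_eq
    (t := t) (by rwa [abs_of_nonneg ht, hc i])
  exact B.β_iota12_mul_le v z y hy hzvy

end IdealNorms

/-- **Lemma 1.3.** (1) `α(ι_{2,∞}ⁿ) · 1-π₂ⁿ(u) ≤ √n · α(u)`;
(2) `β(ι_{1,2}ⁿ) · 1-π₂ⁿ(v*) ≤ √n · β(v)`. -/
theorem ideal_norm_eqPi2n (n : ℕ) (A : IdealNormDom n) (B : IdealNormCod n) :
    (∀ (X : Type) [NormedAddCommGroup X] [NormedSpace ℝ X] [CompleteSpace X]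
      (u : l2n n →L[ℝ] X),
        A.α (linfn n) (iota2inf n) * eqPi2n n (⇑u) ≤ Real.sqrt n * A.α X u) ∧
    (∀ (X : Type) [NormedAddCommGroup X] [NormedSpace ℝ X] [CompleteSpace X]
      (v : X →L[ℝ] l2n n),
        B.β (l1n n) (iota12 n) * eqPi2n n (adjointCod v) ≤ Real.sqrt n * B.β X v) := by
  refine ⟨fun X _ _ _ u => ?_, fun X _ _ _ v => ?_⟩
  · exact mul_eqPi2n_le u (A.α_nonneg _) (A.α_nonneg u) fun x _ hc =>
      A.α_iota2inf_mul_norm_le u x hc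
  · exact mul_eqPi2n_le (adjointCod v) (B.β_nonneg _) (B.β_nonneg v) fun z _ hc =>
      B.β_iota12_mul_norm_le v z hc

end
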